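/- Climbing energies yield an increasing family of minimum cuts: if {ω^j : 1 ≤ j ≤ p} is a family of energies on the cuts of a finite hierarchy H such that each ω^j is h-increasing, each ω^j has a unique minimum cut on every sub-hierarchy H(S), and the family is scale increasing, then the minimum cuts π^{j*} of H satisfy π^{j*} ≤ π^{k*} (refinement) whenever j ≤ k; hence {π^{j*}} forms a chain of partitions. -/

import Mathlib

open Set

/-- A partial partition of `E`: a collection of nonempty pairwise disjoint classes. -/
def IsPP {E : Type*} (π : Set (Set E)) : Prop :=
  (∀ S ∈ π, S.Nonempty) ∧ π.PairwiseDisjoint id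

/-- A (finite) hierarchy of partitions of `E`, described by the family of its classes:
any two classes are nested or disjoint, and the whole space is a class. -/
structure Hierarchy (E : Type*) where
  nodes : Set (Set E)
  finite : nodes.Finite
  nonempty_mem : ∀ S ∈ nodes, S.Nonempty
  nested : ∀ S ∈ nodes, ∀ T ∈ nodes, S ⊆ T ∨ T ⊆ S ∨ S ∩ T = ∅
  top_mem : Set.univ ∈ nodes

/-- A cut of the sub-hierarchy `H(S)`: a partial partition of support `S`
whose classes are classes of the hierarchy. -/
def Cut {E : Type*} (H : Hierarchy E) (S : Set E) (π : Set (Set E)) : Prop :=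
  π ⊆ H.nodes ∧ IsPP π ∧ ⋃₀ π = S

/-- `h`-increasingness of an energy on partial partitions. -/
def HIncreasing {E : Type*} (ω : Set (Set E) → NNReal) : Prop :=
  ∀ π₀ π₁ π₂ : Set (Set E), IsPP π₀ → IsPP π₁ → IsPP π₂ →
    ⋃₀ π₁ = ⋃₀ π₂ → Disjoint (⋃₀ π₁) (⋃₀ π₀) →
    ω π₁ ≤ ω π₂ → ω (π₁ ∪ π₀) ≤ ω (π₂ ∪ π₀)

/-- Scale increasingness of a family of energies on the cuts of a hierarchy `H`:
for `j ≤ k`, each node `S` and each cut `π` of `S`,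
`ω j {S} ≤ ω j π` implies `ω k {S} ≤ ω k π`. -/
def ScaleIncreasing {E : Type*} (H : Hierarchy E) {p : ℕ}
    (ω : Fin p → Set (Set E) → NNReal) : Prop :=
  ∀ j k : Fin p, j ≤ k → ∀ S ∈ H.nodes, ∀ π : Set (Set E), Cut H S π →
    ω j {S} ≤ ω j π → ω k {S} ≤ ω k π

/-!
A class `D` of the minimum cut of `E` at scale `j` is itself the minimum cut of `H(D)`:
otherwise replacing `D` by a better cut of `D` would, by `h`-increasingness, give a cut of `E`
at least as good as the unique minimum one. Scale increasingness transfers this optimality of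
`{D}` to every scale `k ≥ j`. Now if `D` were not inside a class of the minimum cut at scale `k`,
nestedness of the hierarchy would make the classes of that cut lying inside `D` cover `D`, and
replacing them by `{D}` would again improve the unique minimum.
-/

section

variable {E : Type*}

lemma IsPP.subset {π σ : Set (Set E)} (hπ : IsPP π) (hσ : σ ⊆ π) : IsPP σ :=
  ⟨fun S hS => hπ.1 S (hσ hS), hπ.2.subset hσ⟩

lemma IsPP.union {π₁ π₀ : Set (Set E)} (h₁ : IsPP π₁) (h₀ : IsPP π₀)
    (hd : Disjoint (⋃₀ π₁) (⋃₀ π₀)) : IsPP (π₁ ∪ π₀) := by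
  constructor
  · rintro S (hS | hS)
    exacts [h₁.1 S hS, h₀.1 S hS]
  · rintro a (ha | ha) b (hb | hb) hab
    · exact h₁.2 ha hb hab
    · exact hd.mono (subset_sUnion_of_mem ha) (subset_sUnion_of_mem hb)
    · exact (hd.mono (subset_sUnion_of_mem hb) (subset_sUnion_of_mem ha)).symm
    · exact h₀.2 ha hb hab

lemma IsPP.disjoint_sUnion_diff {π σ : Set (Set E)} (hπ : IsPP π) (hσ : σ ⊆ π) :
    Disjoint (⋃₀ σ) (⋃₀ (π \ σ)) := by
  refine disjoint_sUnion_left.2 fun T hT => disjoint_sUnion_right.2 fun U hU => ?_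
  exact hπ.2 (hσ hT) hU.1 fun h => hU.2 (h ▸ hT)

namespace Cut

variable {H : Hierarchy E} {S : Set E} {π : Set (Set E)}

lemma singleton (hS : S ∈ H.nodes) : Cut H S {S} :=
  ⟨singleton_subset_iff.2 hS,
    ⟨fun _ hT => (mem_singleton_iff.1 hT) ▸ H.nonempty_mem S hS, pairwiseDisjoint_singleton S id⟩,
    sUnion_singleton S⟩

lemma subset (hπ : Cut H S π) {σ : Set (Set E)} (hσ : σ ⊆ π) : Cut H (⋃₀ σ) σ :=
  ⟨hσ.trans hπ.1, hπ.2.1.subset hσ, rfl⟩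

lemma exists_superset_or_sUnion_sep_eq (hπ : Cut H S π) {C : Set E} (hC : C ∈ H.nodes)
    (hCS : C ⊆ S) : (∃ C' ∈ π, C ⊆ C') ∨ ⋃₀ {T ∈ π | T ⊆ C} = C := by
  refine or_iff_not_imp_left.2 fun hno => (sUnion_subset fun T hT => hT.2).antisymm ?_
  intro y hy
  obtain ⟨T, hT, hyT⟩ : y ∈ ⋃₀ π := hπ.2.2 ▸ hCS hy
  rcases H.nested T (hπ.1 hT) C hC with hTC | hCT | hTC
  · exact ⟨T, ⟨hT, hTC⟩, hyT⟩
  · exact (hno ⟨T, hT, hCT⟩).elim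
  · exact (hTC.subset ⟨hyT, hy⟩).elim

end Cut

def IsUniqueMinCut (H : Hierarchy E) (ω : Set (Set E) → NNReal) (S : Set E)
    (π : Set (Set E)) : Prop :=
  Cut H S π ∧ ∀ π', Cut H S π' → π' ≠ π → ω π < ω π'

namespace IsUniqueMinCut

variable {H : Hierarchy E} {ω : Set (Set E) → NNReal} {S : Set E} {π : Set (Set E)}

theorem lt_of_subset (hω : HIncreasing ω) (hπ : IsUniqueMinCut H ω S π) {σ τ : Set (Set E)}
    (hσ : σ ⊆ π) (hτ : Cut H (⋃₀ σ) τ) (hne : τ ≠ σ) : ω σ < ω τ := by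
  by_contra! hle
  set π₀ := π \ σ
  have hpp₀ : IsPP π₀ := hπ.1.2.1.subset sdiff_subset
  have hdisj : Disjoint (⋃₀ τ) (⋃₀ π₀) := hτ.2.2 ▸ hπ.1.2.1.disjoint_sUnion_diff hσ
  have hπ_eq : σ ∪ π₀ = π := union_sdiff_cancel hσ
  have hcut : Cut H S (τ ∪ π₀) := by
    refine ⟨union_subset hτ.1 (sdiff_subset.trans hπ.1.1), hτ.2.1.union hpp₀ hdisj, ?_⟩
    rw [sUnion_union, hτ.2.2, ← sUnion_union, hπ_eq, hπ.1.2.2]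
  have hτπ₀ : Disjoint τ π₀ := by
    refine disjoint_left.2 fun T hT hT₀ => ?_
    obtain ⟨x, hx⟩ := hτ.2.1.1 T hT
    exact disjoint_left.1 hdisj ⟨T, hT, hx⟩ ⟨T, hT₀, hx⟩
  have hne' : τ ∪ π₀ ≠ π := fun h => hne <| by
    rw [← hτπ₀.sdiff_eq_left, ← union_sdiff_right, h, sdiff_sdiff_cancel_left hσ]
  have hinc := hω π₀ τ σ hpp₀ hτ.2.1 (hπ.1.2.1.subset hσ) hτ.2.2 hdisj hle
  rw [hπ_eq] at hinc
  exact (hπ.2 _ hcut hne').not_ge hinc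

theorem le_of_mem (hω : HIncreasing ω) (hπ : IsUniqueMinCut H ω S π) {D : Set E} (hD : D ∈ π)
    {τ : Set (Set E)} (hτ : Cut H D τ) : ω {D} ≤ ω τ := by
  rcases eq_or_ne τ {D} with rfl | hne
  · exact le_rfl
  · exact (hπ.lt_of_subset hω (singleton_subset_iff.2 hD) (by rwa [sUnion_singleton]) hne).le

theorem exists_superset (hω : HIncreasing ω) (hπ : IsUniqueMinCut H ω S π) {C : Set E}
    (hC : C ∈ H.nodes) (hCS : C ⊆ S) (hle : ∀ τ, Cut H C τ → ω {C} ≤ ω τ) :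
    ∃ C' ∈ π, C ⊆ C' := by
  refine (hπ.1.exists_superset_or_sUnion_sep_eq hC hCS).elim id fun hcover => ?_
  by_contra hno
  set σ := {T ∈ π | T ⊆ C}
  have hne : {C} ≠ σ := fun h => hno ⟨C, (h ▸ mem_singleton C : C ∈ σ).1, subset_rfl⟩
  have hσ : Cut H C σ := hcover ▸ hπ.1.subset (sep_subset π _)
  have hlt := hπ.lt_of_subset hω (sep_subset π _) (by rw [hcover]; exact Cut.singleton hC) hne
  exact hlt.not_ge (hle σ hσ)

end IsUniqueMinCut

end

/-- climbing theorem, "if" part: if each `ω j` is `h`-increasing,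
each `ω j` has a unique minimum cut `πstar j S` on every sub-hierarchy `H(S)`, and
the family `{ω j}` is scale increasing, then the minimum cuts of `H` increase with
the scale: for `j ≤ k`, every class of `πstar j univ` is contained in a class of
`πstar k univ`, i.e. the minimum cuts form a chain for the refinement ordering. -/
theorem stmt16 {E : Type*} (H : Hierarchy E) (p : ℕ)
    (ω : Fin p → Set (Set E) → NNReal)
    (hh : ∀ j, HIncreasing (ω j))
    (πstar : Fin p → Set E → Set (Set E))
    (hmin : ∀ j, ∀ S ∈ H.nodes, Cut H S (πstar j S) ∧
      ∀ π, Cut H S π → π ≠ πstar j S → ω j (πstar j S) < ω j π)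
    (hscale : ScaleIncreasing H ω) :
    ∀ j k : Fin p, j ≤ k →
      ∀ C ∈ πstar j Set.univ, ∃ C' ∈ πstar k Set.univ, C ⊆ C' := by
  intro j k hjk C hC
  have hj : IsUniqueMinCut H (ω j) univ (πstar j univ) := hmin j univ H.top_mem
  have hk : IsUniqueMinCut H (ω k) univ (πstar k univ) := hmin k univ H.top_mem
  have hCnode : C ∈ H.nodes := hj.1.1 hC
  exact hk.exists_superset (hh k) hCnode (subset_univ C) fun τ hτ =>
    hscale j k hjk C hCnode τ hτ (hj.le_of_mem (hh j) hC hτ)
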